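/- arXiv:1711.03937 — 2 statements merged into one kernel-verified Lean document; each statement's English description precedes it below -/
import Mathlib

section
/- Suppose each composite map φ_i(x) = F_i(G(x)) is convex with gradient ∇φ_i(x) = (∇G(x))ᵀ∇F_i(G(x)) that is L_f-Lipschitz in x, let h : ℝ^N → ℝ be convex, and let x* be a minimizer of H(x) = (1/n₁)∑_i F_i(G(x)) + h(x). Then for all x ∈ ℝ^N, (1/n₁)·∑_{i=1}^{n₁} ‖(∇G(x))ᵀ∇F_i(G(x)) − (∇G(x*))ᵀ∇F_i(G(x*))‖² ≤ 2L_f·(H(x) − H(x*)). -/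
open scoped BigOperators RealInnerProductSpace
open Finset

noncomputable section

/-- ℝ^N as a Euclidean (inner product) space. -/
abbrev En (N : ℕ) : Type := EuclideanSpace ℝ (Fin N)

/-- Hilbert–Schmidt (Frobenius) norm of a continuous linear map between Euclidean spaces. -/
def hsNorm {N M : ℕ} (T : En N →L[ℝ] En M) : ℝ :=
  Real.sqrt (∑ j : Fin N, ‖T (EuclideanSpace.single j 1)‖ ^ 2)

/-- G(x) = (1/n₂) ∑ⱼ Gⱼ(x). -/
def Gbar {N M n₂ : ℕ} (Gf : Fin n₂ → En N → En M) (x : En N) : En M :=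
  (n₂ : ℝ)⁻¹ • ∑ j, Gf j x

/-- ∇G(x) = (1/n₂) ∑ⱼ ∇Gⱼ(x). -/
def DGbar {N M n₂ : ℕ} (Gf : Fin n₂ → En N → En M) (x : En N) : En N →L[ℝ] En M :=
  (n₂ : ℝ)⁻¹ • ∑ j, fderiv ℝ (Gf j) x

/-- f(x) = (1/n₁) ∑ᵢ Fᵢ(G(x)). -/
def fComp {N M n₁ n₂ : ℕ} (F : Fin n₁ → En M → ℝ) (Gf : Fin n₂ → En N → En M) (x : En N) : ℝ :=
  (n₁ : ℝ)⁻¹ * ∑ i, F i (Gbar Gf x)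

/-- ∇f(x) = (∇G(x))ᵀ ((1/n₁) ∑ᵢ ∇Fᵢ(G(x))). -/
def gradf {N M n₁ n₂ : ℕ} (F : Fin n₁ → En M → ℝ) (Gf : Fin n₂ → En N → En M) (x : En N) :
    En N :=
  ContinuousLinearMap.adjoint (DGbar Gf x) ((n₁ : ℝ)⁻¹ • ∑ i, gradient (F i) (Gbar Gf x))

/-- Ĝ(a) = G(x̃) − (1/A) ∑ₖ (G_{aₖ}(x̃) − G_{aₖ}(x)). -/
def Ghat {N M n₂ A : ℕ} (Gf : Fin n₂ → En N → En M) (x xt : En N) (a : Fin A → Fin n₂) :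
    En M :=
  Gbar Gf xt - (A : ℝ)⁻¹ • ∑ k, (Gf (a k) xt - Gf (a k) x)

/-- D̂(b) = ∇G(x̃) − (1/B) ∑ₖ (∇G_{bₖ}(x̃) − ∇G_{bₖ}(x)). -/
def Dhat {N M n₂ B : ℕ} (Gf : Fin n₂ → En N → En M) (x xt : En N) (b : Fin B → Fin n₂) :
    En N →L[ℝ] En M :=
  DGbar Gf xt - (B : ℝ)⁻¹ • ∑ k, (fderiv ℝ (Gf (b k)) xt - fderiv ℝ (Gf (b k)) x)

/-- The VRSC-PG gradient estimator v(ι,a,b). -/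
def vEst {N M n₁ n₂ b₁ A B : ℕ} (F : Fin n₁ → En M → ℝ) (Gf : Fin n₂ → En N → En M)
    (x xt : En N) (ι : Fin b₁ → Fin n₁) (a : Fin A → Fin n₂) (b : Fin B → Fin n₂) : En N :=
  (b₁ : ℝ)⁻¹ • ∑ k,
      (ContinuousLinearMap.adjoint (Dhat Gf x xt b) (gradient (F (ι k)) (Ghat Gf x xt a))
        - ContinuousLinearMap.adjoint (DGbar Gf xt) (gradient (F (ι k)) (Gbar Gf xt)))
    + gradf F Gf xt

/-- Sample space for one iteration: an index tuple (ι, a, b). -/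
abbrev Tup (n₁ n₂ b₁ A B : ℕ) : Type :=
  (Fin b₁ → Fin n₁) × (Fin A → Fin n₂) × (Fin B → Fin n₂)

end

/-! A convex function with `L`-Lipschitz gradient satisfies the cocoercivity bound
`‖∇φ x - ∇φ y‖² ≤ 2L (φ x - φ y - ⟪∇φ y, x - y⟫)`: compare the tangent-plane lower bound at `y`
with the quadratic upper bound at `x` (descent lemma) at the gradient step
`z = x - (∇φ x - ∇φ y) / L`. Averaging over the components leaves the term
`-⟪∇f x*, x - x*⟫`, which first-order optimality of `x*` for `f + h` bounds by `h x - h x*`. -/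

open Set

section

variable {E : Type*} [NormedAddCommGroup E] [InnerProductSpace ℝ E] [CompleteSpace E]

theorem HasGradientAt.hasDerivAt_comp_add_smul {φ : E → ℝ} {g x d : E} {t : ℝ}
    (hg : HasGradientAt φ g (x + t • d)) :
    HasDerivAt (fun s : ℝ => φ (x + s • d)) ⟪g, d⟫ t := by
  have hline : HasDerivAt (fun s : ℝ => x + s • d) d t := by
    simpa using ((hasDerivAt_id t).smul_const d).const_add x
  have := (hasGradientAt_iff_hasFDerivAt.mp hg).comp_hasDerivAt t hline
  rwa [InnerProductSpace.toDual_apply_apply] at this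

theorem ConvexOn.add_inner_sub_le_of_hasGradientAt {φ : E → ℝ} {g x : E}
    (hφ : ConvexOn ℝ univ φ) (hg : HasGradientAt φ g x) (y : E) :
    φ x + ⟪g, y - x⟫ ≤ φ y := by
  have hline : ConvexOn ℝ univ fun t : ℝ => φ (x + t • (y - x)) := by
    have hcomp : φ ∘ AffineMap.lineMap x y = fun t : ℝ => φ (x + t • (y - x)) := by
      ext t
      simp [AffineMap.lineMap_apply_module', add_comm]
    simpa [hcomp] using hφ.comp_affineMap (AffineMap.lineMap x y)
  have hderiv := hline.le_slope_of_hasDerivAt (mem_univ 0) (mem_univ 1) one_pos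
    (HasGradientAt.hasDerivAt_comp_add_smul (by simpa using hg))
  simp only [slope_def_field, zero_smul, add_zero, one_smul, add_sub_cancel, sub_zero,
    div_one] at hderiv
  linarith

theorem le_add_inner_add_sq_of_gradient_lipschitz {φ : E → ℝ} {g : E → E} {L : ℝ}
    (hg : ∀ z, HasGradientAt φ (g z) z) (hlip : ∀ a b, ‖g a - g b‖ ≤ L * ‖a - b‖) (x y : E) :
    φ y ≤ φ x + ⟪g x, y - x⟫ + L / 2 * ‖y - x‖ ^ 2 := by
  set d := y - x
  let ψ : ℝ → ℝ := fun t => φ (x + t • d) - t * ⟪g x, d⟫ - L / 2 * t ^ 2 * ‖d‖ ^ 2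
  have hψ : ∀ t, HasDerivAt ψ (⟪g (x + t • d), d⟫ - ⟪g x, d⟫ - L * t * ‖d‖ ^ 2) t := by
    intro t
    have := (((hg (x + t • d)).hasDerivAt_comp_add_smul).sub
      ((hasDerivAt_id t).mul_const ⟪g x, d⟫)).sub
      (((hasDerivAt_pow 2 t).const_mul (L / 2)).mul_const (‖d‖ ^ 2))
    refine this.congr_deriv ?_
    push_cast
    ring
  have hanti : AntitoneOn ψ (Icc 0 1) := by
    refine antitoneOn_of_hasDerivWithinAt_nonpos (convex_Icc 0 1)
      (fun t _ => (hψ t).continuousAt.continuousWithinAt) (fun t _ => (hψ t).hasDerivWithinAt) ?_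
    intro t ht
    rw [interior_Icc] at ht
    have hnorm : ‖g (x + t • d) - g x‖ ≤ L * t * ‖d‖ := by
      simpa [norm_smul, abs_of_pos ht.1, mul_assoc] using hlip (x + t • d) x
    calc ⟪g (x + t • d), d⟫ - ⟪g x, d⟫ - L * t * ‖d‖ ^ 2
        = ⟪g (x + t • d) - g x, d⟫ - L * t * ‖d‖ ^ 2 := by rw [inner_sub_left]
      _ ≤ ‖g (x + t • d) - g x‖ * ‖d‖ - L * t * ‖d‖ ^ 2 := by
          gcongr; exact real_inner_le_norm _ _
      _ ≤ L * t * ‖d‖ * ‖d‖ - L * t * ‖d‖ ^ 2 := by gcongr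
      _ = 0 := by ring
  have h01 := hanti (left_mem_Icc.mpr zero_le_one) (right_mem_Icc.mpr zero_le_one) zero_le_one
  simp only [ψ, one_smul, zero_smul, add_zero, d, add_sub_cancel] at h01
  linarith

theorem ConvexOn.sq_norm_sub_gradient_le {φ : E → ℝ} {g : E → E} {L : ℝ}
    (hφ : ConvexOn ℝ univ φ) (hg : ∀ z, HasGradientAt φ (g z) z) (hL : 0 < L)
    (hlip : ∀ a b, ‖g a - g b‖ ≤ L * ‖a - b‖) (x y : E) :
    ‖g x - g y‖ ^ 2 ≤ 2 * L * (φ x - φ y - ⟪g y, x - y⟫) := by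
  set u := g x - g y
  -- Evaluate the lower bound from `y` and the upper bound from `x` at the gradient step `z`.
  set z := x - L⁻¹ • u
  have hlower := hφ.add_inner_sub_le_of_hasGradientAt (hg y) z
  have hupper := le_add_inner_add_sq_of_gradient_lipschitz hg hlip x z
  have hzx : z - x = -(L⁻¹ • u) := by simp [z]
  have hzy : z - y = (x - y) - L⁻¹ • u := by simp only [z]; abel
  rw [hzx, inner_neg_right, real_inner_smul_right, norm_neg, norm_smul,
    Real.norm_of_nonneg (inv_nonneg.2 hL.le)] at hupper
  rw [hzy, inner_sub_right, real_inner_smul_right] at hlower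
  have hu : ⟪g x, u⟫ - ⟪g y, u⟫ = ‖u‖ ^ 2 := by
    rw [← inner_sub_left, real_inner_self_eq_norm_sq]
  have hgap : ‖u‖ ^ 2 / (2 * L)
      = L⁻¹ * ⟪g x, u⟫ - L⁻¹ * ⟪g y, u⟫ - L / 2 * (L⁻¹ * ‖u‖) ^ 2 := by
    rw [← mul_sub, hu]
    field_simp
    ring
  have key : ‖u‖ ^ 2 / (2 * L) ≤ φ x - φ y - ⟪g y, x - y⟫ := by linarith
  rwa [div_le_iff₀ (by positivity), mul_comm] at key

theorem inner_gradient_add_sub_nonneg_of_isMinOn {f h : E → ℝ} {g xs : E}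
    (hh : ConvexOn ℝ univ h) (hf : HasGradientAt f g xs)
    (hmin : IsMinOn (fun z => f z + h z) univ xs) (x : E) :
    0 ≤ ⟪g, x - xs⟫ + (h x - h xs) := by
  set d := x - xs
  -- Replacing `h` by its chord on `[xs, x]` keeps `t = 0` a minimiser on `[0, 1]`.
  let ψ : ℝ → ℝ := fun t => f (xs + t • d) + t * (h x - h xs)
  have hψmin : IsLocalMinOn ψ (Icc 0 1) 0 := by
    refine IsMinOn.localize fun t ht => ?_
    have hchord : h (xs + t • d) ≤ (1 - t) * h xs + t * h x := by
      have hseg : (1 - t) • xs + t • x = xs + t • d := by simp only [d]; module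
      simpa [hseg] using
        hh.2 (mem_univ xs) (mem_univ x) (sub_nonneg.2 ht.2) ht.1 (sub_add_cancel 1 t)
    have hle : f xs + h xs ≤ f (xs + t • d) + h (xs + t • d) := hmin (mem_univ _)
    show ψ 0 ≤ ψ t
    simp only [ψ, zero_smul, add_zero, zero_mul]
    linarith
  have hψ : HasDerivAt ψ (⟪g, d⟫ + (h x - h xs)) 0 := by
    have hf0 : HasGradientAt f g (xs + (0 : ℝ) • d) := by simpa using hf
    have := hf0.hasDerivAt_comp_add_smul.add
      ((hasDerivAt_id (0 : ℝ)).mul_const (h x - h xs))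
    simp only [id, one_mul] at this
    exact this
  simpa using hψmin.hasFDerivWithinAt_nonneg hψ.hasFDerivAt.hasFDerivWithinAt
    (sub_mem_posTangentConeAt_of_segment_subset (segment_eq_Icc zero_le_one).subset)

theorem HasGradientAt.const_mul_sum {ι : Type*} [Fintype ι] {φ : ι → E → ℝ} {g : ι → E} {x : E}
    (hg : ∀ i, HasGradientAt (φ i) (g i) x) (c : ℝ) :
    HasGradientAt (fun z => c * ∑ i, φ i z) (c • ∑ i, g i) x := by
  rw [hasGradientAt_iff_hasFDerivAt, map_smul, map_sum]
  exact (HasFDerivAt.fun_sum fun i _ => hasGradientAt_iff_hasFDerivAt.mp (hg i)).const_mul c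

theorem sum_sq_norm_sub_gradient_le_of_isMinOn {ι : Type*} [Fintype ι] {φ : ι → E → ℝ}
    {g : ι → E → E} {h : E → ℝ} {c L : ℝ} {xs : E} (hc : 0 ≤ c) (hL : 0 < L)
    (hφ : ∀ i, ConvexOn ℝ univ (φ i)) (hg : ∀ i z, HasGradientAt (φ i) (g i z) z)
    (hlip : ∀ i a b, ‖g i a - g i b‖ ≤ L * ‖a - b‖) (hh : ConvexOn ℝ univ h)
    (hmin : IsMinOn (fun z => c * ∑ i, φ i z + h z) univ xs) (x : E) :
    c * ∑ i, ‖g i x - g i xs‖ ^ 2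
      ≤ 2 * L * ((c * ∑ i, φ i x + h x) - (c * ∑ i, φ i xs + h xs)) := by
  have hopt := inner_gradient_add_sub_nonneg_of_isMinOn hh
    (HasGradientAt.const_mul_sum (fun i => hg i xs) c) hmin x
  rw [real_inner_smul_left, sum_inner] at hopt
  have hcoco : ∑ i, ‖g i x - g i xs‖ ^ 2
      ≤ ∑ i, 2 * L * (φ i x - φ i xs - ⟪g i xs, x - xs⟫) :=
    sum_le_sum fun i _ => (hφ i).sq_norm_sub_gradient_le (hg i) hL (hlip i) x xs
  calc c * ∑ i, ‖g i x - g i xs‖ ^ 2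
      ≤ c * ∑ i, 2 * L * (φ i x - φ i xs - ⟪g i xs, x - xs⟫) := by gcongr
    _ = 2 * L * (c * ∑ i, φ i x - c * ∑ i, φ i xs - c * ∑ i, ⟪g i xs, x - xs⟫) := by
      simp only [← mul_sum, sum_sub_distrib]
      ring
    _ ≤ 2 * L * ((c * ∑ i, φ i x + h x) - (c * ∑ i, φ i xs + h xs)) :=
      mul_le_mul_of_nonneg_left (by linarith) (by positivity)

end

theorem composite_gradient_deviation_bound_general
    (N M n₁ n₂ : ℕ)
    (F : Fin n₁ → En M → ℝ) (Gf : Fin n₂ → En N → En M)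
    (h : En N → ℝ) (hconv : ConvexOn ℝ Set.univ h)
    (L_f : ℝ) (hLf : 0 < L_f)
    -- each composite map φᵢ = Fᵢ ∘ G is convex ...
    (hφconv : ∀ i, ConvexOn ℝ Set.univ (fun x : En N => F i (Gbar Gf x)))
    -- ... with gradient ∇φᵢ(x) = (∇G(x))ᵀ∇Fᵢ(G(x)) ...
    (hφgrad : ∀ (i : Fin n₁) (x : En N),
      HasGradientAt (fun z : En N => F i (Gbar Gf z))
        (ContinuousLinearMap.adjoint (DGbar Gf x) (gradient (F i) (Gbar Gf x))) x)
    -- ... that is L_f-Lipschitz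
    (hφlip : ∀ (i : Fin n₁) (x y : En N),
      ‖ContinuousLinearMap.adjoint (DGbar Gf x) (gradient (F i) (Gbar Gf x))
        - ContinuousLinearMap.adjoint (DGbar Gf y) (gradient (F i) (Gbar Gf y))‖
        ≤ L_f * ‖x - y‖)
    -- x* is a minimizer of H = (1/n₁)∑ᵢ Fᵢ(G(·)) + h
    (xstar : En N)
    (hmin : ∀ z : En N, fComp F Gf xstar + h xstar ≤ fComp F Gf z + h z) :
    ∀ x : En N,
      (n₁ : ℝ)⁻¹ * ∑ i : Fin n₁,
          ‖ContinuousLinearMap.adjoint (DGbar Gf x) (gradient (F i) (Gbar Gf x))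
            - ContinuousLinearMap.adjoint (DGbar Gf xstar)
                (gradient (F i) (Gbar Gf xstar))‖ ^ 2
        ≤ 2 * L_f * ((fComp F Gf x + h x) - (fComp F Gf xstar + h xstar)) :=
  sum_sq_norm_sub_gradient_le_of_isMinOn (inv_nonneg.2 n₁.cast_nonneg) hLf hφconv hφgrad hφlip
    hconv fun z _ => hmin z

/-- bound on the averaged squared deviation of the composite component
gradients from their values at a minimizer of H. -/
theorem composite_gradient_deviation_bound
    (N M n₁ n₂ : ℕ) (hn₁ : 0 < n₁) (hn₂ : 0 < n₂)
    (F : Fin n₁ → En M → ℝ) (Gf : Fin n₂ → En N → En M)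
    (hF : ∀ i, ContDiff ℝ 1 (F i)) (hGf : ∀ j, ContDiff ℝ 1 (Gf j))
    (h : En N → ℝ) (hconv : ConvexOn ℝ Set.univ h)
    (L_f : ℝ) (hLf : 0 < L_f)
    -- each composite map φᵢ = Fᵢ ∘ G is convex ...
    (hφconv : ∀ i, ConvexOn ℝ Set.univ (fun x : En N => F i (Gbar Gf x)))
    -- ... with gradient ∇φᵢ(x) = (∇G(x))ᵀ∇Fᵢ(G(x)) ...
    (hφgrad : ∀ (i : Fin n₁) (x : En N),
      HasGradientAt (fun z : En N => F i (Gbar Gf z))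
        (ContinuousLinearMap.adjoint (DGbar Gf x) (gradient (F i) (Gbar Gf x))) x)
    -- ... that is L_f-Lipschitz
    (hφlip : ∀ (i : Fin n₁) (x y : En N),
      ‖ContinuousLinearMap.adjoint (DGbar Gf x) (gradient (F i) (Gbar Gf x))
        - ContinuousLinearMap.adjoint (DGbar Gf y) (gradient (F i) (Gbar Gf y))‖
        ≤ L_f * ‖x - y‖)
    -- x* is a minimizer of H = (1/n₁)∑ᵢ Fᵢ(G(·)) + h
    (xstar : En N)
    (hmin : ∀ z : En N, fComp F Gf xstar + h xstar ≤ fComp F Gf z + h z) :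
    ∀ x : En N,
      (n₁ : ℝ)⁻¹ * ∑ i : Fin n₁,
          ‖ContinuousLinearMap.adjoint (DGbar Gf x) (gradient (F i) (Gbar Gf x))
            - ContinuousLinearMap.adjoint (DGbar Gf xstar)
                (gradient (F i) (Gbar Gf xstar))‖ ^ 2
        ≤ 2 * L_f * ((fComp F Gf x + h x) - (fComp F Gf xstar + h xstar)) :=
  composite_gradient_deviation_bound_general N M n₁ n₂ F Gf h hconv L_f hLf hφconv hφgrad hφlip
    xstar hmin
end

section
/- Assume ‖∇F_i(y)‖ ≤ B_F and ‖∇F_i(y) − ∇F_i(y')‖ ≤ L_F‖y − y'‖ for all y, y' ∈ ℝ^M and all i, ‖∇G_j(x)‖ ≤ B_G and ‖∇G_j(x) − ∇G_j(x')‖ ≤ L_G‖x − x'‖ for all x, x' ∈ ℝ^N and all j (Hilbert–Schmidt norms on linear maps). Fix x, x̃ ∈ ℝ^N, an arbitrary point x* ∈ ℝ^N, batch sizes A, B ≥ 1, and an index i ∈ {1,…,n₁}. Then the uniform average over all pairs of tuples (a, b) ∈ {1,…,n₂}^{A} × {1,…,n₂}^{B} satisfies 𝔼_{a,b} ‖(D̂(b))ᵀ∇F_i(Ĝ(a))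 − (∇G(x))ᵀ∇F_i(G(x))‖² ≤ 16·(B_F²L_G²/B + B_G⁴L_F²/A)·(‖x − x*‖² + ‖x̃ − x*‖²). -/
open scoped BigOperators RealInnerProductSpace
open Finset

/-!
Split the error as `(D̂(b) - ∇G(x))ᵀ ∇Fᵢ(Ĝ(a)) + ∇G(x)ᵀ (∇Fᵢ(Ĝ(a)) - ∇Fᵢ(G(x)))`, so that its square is at
most `2 B_F² ‖D̂(b) - ∇G(x)‖² + 2 B_G² L_F² ‖Ĝ(a) - G(x)‖²`. Both `Ĝ(a) - G(x)` and `D̂(b) - ∇G(x)` are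
deviations of the sample mean of `A` (resp. `B`) independent uniform draws of `Gⱼ(x̃) - Gⱼ(x)` (resp.
`∇Gⱼ(x̃) - ∇Gⱼ(x)`) from the population mean. Cross terms of independent centred draws average to zero, so the
mean square deviation is `1/A` (resp. `1/B`) times the variance, which is at most the second moment:
`(B_G ‖x̃ - x‖)²` by the mean value inequality, resp. `(L_G ‖x̃ - x‖)²`. For Jacobians the argument runs in the
space of columns, whose norm is the Hilbert–Schmidt norm and dominates the operator norm. Finally
`‖x̃ - x‖² ≤ 2 (‖x - x*‖² + ‖x̃ - x*‖²)`.
-/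

section HilbertSchmidt

variable {N M : ℕ}

noncomputable def hsColumns : (En N →L[ℝ] En M) →ₗ[ℝ] PiLp 2 (fun _ : Fin N => En M) where
  toFun T := WithLp.toLp 2 fun j => T (EuclideanSpace.single j 1)
  map_add' _ _ := rfl
  map_smul' _ _ := rfl

lemma hsNorm_eq_norm_hsColumns (T : En N →L[ℝ] En M) : hsNorm T = ‖hsColumns T‖ := by
  rw [PiLp.norm_eq_of_L2]; rfl

lemma hsNorm_nonneg (T : En N →L[ℝ] En M) : 0 ≤ hsNorm T :=
  Real.sqrt_nonneg _

lemma norm_apply_le_hsNorm (T : En N →L[ℝ] En M) (w : En N) : ‖T w‖ ≤ hsNorm T * ‖w‖ := by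
  have hw : T w = ∑ j, w j • T (EuclideanSpace.single j 1) := by
    conv_lhs => rw [← (EuclideanSpace.basisFun (Fin N) ℝ).sum_repr w]
    simp
  calc ‖T w‖ ≤ ∑ j, ‖T (EuclideanSpace.single j 1)‖ * ‖w j‖ := by
        rw [hw]
        refine (norm_sum_le _ _).trans_eq (sum_congr rfl fun j _ => ?_)
        rw [norm_smul, mul_comm]
    _ ≤ hsNorm T * √(∑ j, ‖w j‖ ^ 2) := Real.sum_mul_le_sqrt_mul_sqrt _ _ _
    _ = hsNorm T * ‖w‖ := by rw [EuclideanSpace.norm_eq]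

lemma opNorm_le_hsNorm (T : En N →L[ℝ] En M) : ‖T‖ ≤ hsNorm T :=
  T.opNorm_le_bound (hsNorm_nonneg T) (norm_apply_le_hsNorm T)

end HilbertSchmidt

section SampleMean

variable {ι E : Type*} [Fintype ι] [Nonempty ι] [NormedAddCommGroup E] [InnerProductSpace ℝ E]

lemma expect_norm_add_sq_of_sum_eq_zero {Z : ι → E} (hZ : ∑ j, Z j = 0) (v : E) :
    𝔼 j, ‖Z j + v‖ ^ 2 = 𝔼 j, ‖Z j‖ ^ 2 + ‖v‖ ^ 2 := by
  have hcross : 𝔼 j, ⟪Z j, v⟫ = 0 := by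
    rw [Fintype.expect_eq_sum_div_card, ← sum_inner, hZ, inner_zero_left, zero_div]
  simp_rw [norm_add_sq_real, expect_add_distrib, ← mul_expect, hcross, Fintype.expect_const]
  ring

lemma expect_norm_sq_sum_tuple_of_sum_eq_zero {Z : ι → E} (hZ : ∑ j, Z j = 0) (A : ℕ) :
    𝔼 a : Fin A → ι, ‖∑ k, Z (a k)‖ ^ 2 = A * 𝔼 j, ‖Z j‖ ^ 2 := by
  induction A with
  | zero => simp
  | succ A ih =>
    calc 𝔼 a : Fin (A + 1) → ι, ‖∑ k, Z (a k)‖ ^ 2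
        = 𝔼 p : ι × (Fin A → ι), ‖Z p.1 + ∑ k, Z (p.2 k)‖ ^ 2 :=
          Fintype.expect_equiv (Fin.consEquiv fun _ => ι).symm _ _ fun a => by
            simp [Fin.sum_univ_succ, Fin.consEquiv, Fin.tail]
      _ = 𝔼 r : Fin A → ι, 𝔼 j, ‖Z j + ∑ k, Z (r k)‖ ^ 2 := by
          rw [← univ_product_univ, expect_product, expect_comm]
      _ = 𝔼 r : Fin A → ι, (𝔼 j, ‖Z j‖ ^ 2 + ‖∑ k, Z (r k)‖ ^ 2) := by
          simp_rw [expect_norm_add_sq_of_sum_eq_zero hZ]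
      _ = (A + 1 : ℕ) * 𝔼 j, ‖Z j‖ ^ 2 := by
          rw [expect_add_distrib, Fintype.expect_const, ih]
          push_cast
          ring

lemma expect_norm_sq_sampleMean_sub_mean_le {A : ℕ} (hA : A ≠ 0) (Y : ι → E) :
    𝔼 a : Fin A → ι, ‖(A : ℝ)⁻¹ • ∑ k, Y (a k) - (Fintype.card ι : ℝ)⁻¹ • ∑ j, Y j‖ ^ 2
      ≤ (𝔼 j, ‖Y j‖ ^ 2) / A := by
  set μ := (Fintype.card ι : ℝ)⁻¹ • ∑ j, Y j
  set Z := fun j => Y j - μ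
  have hn : (Fintype.card ι : ℝ) ≠ 0 := Nat.cast_ne_zero.2 Fintype.card_ne_zero
  have hZ : ∑ j, Z j = 0 := by
    simp only [Z, μ, sum_sub_distrib, sum_const, card_univ, ← Nat.cast_smul_eq_nsmul ℝ,
      smul_smul, mul_inv_cancel₀ hn, one_smul, sub_self]
  have hA' : (A : ℝ) ≠ 0 := Nat.cast_ne_zero.2 hA
  have hdev : ∀ a : Fin A → ι, (A : ℝ)⁻¹ • ∑ k, Y (a k) - μ = (A : ℝ)⁻¹ • ∑ k, Z (a k) := by
    intro a
    simp only [Z, sum_sub_distrib, sum_const, card_univ, Fintype.card_fin, smul_sub,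
      ← Nat.cast_smul_eq_nsmul ℝ, smul_smul, inv_mul_cancel₀ hA', one_smul]
  have hsecond : 𝔼 j, ‖Z j‖ ^ 2 ≤ 𝔼 j, ‖Y j‖ ^ 2 := by
    have := expect_norm_add_sq_of_sum_eq_zero hZ μ
    simp only [Z, sub_add_cancel] at this
    rw [this]
    exact le_add_of_nonneg_right (sq_nonneg _)
  calc 𝔼 a : Fin A → ι, ‖(A : ℝ)⁻¹ • ∑ k, Y (a k) - μ‖ ^ 2
      = (A : ℝ)⁻¹ ^ 2 * 𝔼 a : Fin A → ι, ‖∑ k, Z (a k)‖ ^ 2 := by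
        simp_rw [hdev, norm_smul, mul_pow, mul_expect, norm_inv, RCLike.norm_natCast]
    _ = (𝔼 j, ‖Z j‖ ^ 2) / A := by
        rw [expect_norm_sq_sum_tuple_of_sum_eq_zero hZ]
        field_simp
    _ ≤ (𝔼 j, ‖Y j‖ ^ 2) / A := by gcongr

lemma expect_norm_sq_sampleMean_sub_mean_le_of_norm_le {A : ℕ} (hA : A ≠ 0) {Y : ι → E} {C : ℝ}
    (hY : ∀ j, ‖Y j‖ ≤ C) :
    𝔼 a : Fin A → ι, ‖(A : ℝ)⁻¹ • ∑ k, Y (a k) - (Fintype.card ι : ℝ)⁻¹ • ∑ j, Y j‖ ^ 2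
      ≤ C ^ 2 / A := by
  refine (expect_norm_sq_sampleMean_sub_mean_le hA Y).trans ?_
  gcongr
  exact expect_le univ_nonempty fun j _ => pow_le_pow_left₀ (norm_nonneg _) (hY j) 2

end SampleMean

lemma expect_prod_fst_add_snd {α β R : Type*} [Fintype α] [Fintype β] [Nonempty α] [Nonempty β]
    [AddCommMonoid R] [Module ℚ≥0 R] (f : α → R) (g : β → R) :
    𝔼 p : α × β, (f p.1 + g p.2) = 𝔼 a, f a + 𝔼 b, g b := by
  rw [← univ_product_univ, expect_product]
  simp only [expect_add_distrib, Fintype.expect_const]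

lemma norm_adjoint_apply_sub_adjoint_apply_sq_le {E F : Type*}
    [NormedAddCommGroup E] [InnerProductSpace ℝ E] [CompleteSpace E]
    [NormedAddCommGroup F] [InnerProductSpace ℝ F] [CompleteSpace F]
    (T T₀ : E →L[ℝ] F) (g g₀ : F) :
    ‖ContinuousLinearMap.adjoint T g - ContinuousLinearMap.adjoint T₀ g₀‖ ^ 2
      ≤ 2 * (‖T - T₀‖ * ‖g‖) ^ 2 + 2 * (‖T₀‖ * ‖g - g₀‖) ^ 2 := by
  set u := ContinuousLinearMap.adjoint (T - T₀) g
  set v := ContinuousLinearMap.adjoint T₀ (g - g₀)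
  have hsplit : ContinuousLinearMap.adjoint T g - ContinuousLinearMap.adjoint T₀ g₀ = u + v := by
    simp only [u, v, map_sub, sub_apply]
    abel
  have hu : ‖u‖ ≤ ‖T - T₀‖ * ‖g‖ := by
    simpa only [LinearIsometryEquiv.norm_map] using
      (ContinuousLinearMap.adjoint (T - T₀)).le_opNorm g
  have hv : ‖v‖ ≤ ‖T₀‖ * ‖g - g₀‖ := by
    simpa only [LinearIsometryEquiv.norm_map] using
      (ContinuousLinearMap.adjoint T₀).le_opNorm (g - g₀)
  rw [hsplit]
  calc ‖u + v‖ ^ 2 ≤ (‖u‖ + ‖v‖) ^ 2 := by gcongr; exact norm_add_le u v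
    _ ≤ 2 * (‖u‖ ^ 2 + ‖v‖ ^ 2) := add_sq_le
    _ ≤ 2 * (‖T - T₀‖ * ‖g‖) ^ 2 + 2 * (‖T₀‖ * ‖g - g₀‖) ^ 2 := by
        rw [mul_add]; gcongr

section Estimators

variable {N M n₂ : ℕ} (Gf : Fin n₂ → En N → En M) (x xt : En N)

lemma Ghat_sub_Gbar {A : ℕ} (a : Fin A → Fin n₂) :
    Ghat Gf x xt a - Gbar Gf x
      = -((A : ℝ)⁻¹ • ∑ k, (Gf (a k) xt - Gf (a k) x) - (n₂ : ℝ)⁻¹ • ∑ j, (Gf j xt - Gf j x)) := by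
  simp only [Ghat, Gbar, sum_sub_distrib, smul_sub]
  abel

lemma Dhat_sub_DGbar {B : ℕ} (b : Fin B → Fin n₂) :
    Dhat Gf x xt b - DGbar Gf x
      = -((B : ℝ)⁻¹ • ∑ k, (fderiv ℝ (Gf (b k)) xt - fderiv ℝ (Gf (b k)) x)
          - (n₂ : ℝ)⁻¹ • ∑ j, (fderiv ℝ (Gf j) xt - fderiv ℝ (Gf j) x)) := by
  simp only [Dhat, DGbar, sum_sub_distrib, smul_sub]
  abel

variable [NeZero n₂]

lemma norm_DGbar_le {B_G : ℝ} (hG_bd : ∀ j (x : En N), hsNorm (fderiv ℝ (Gf j) x) ≤ B_G) :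
    ‖DGbar Gf x‖ ≤ B_G := by
  have hn : (n₂ : ℝ) ≠ 0 := Nat.cast_ne_zero.2 (NeZero.ne n₂)
  calc ‖DGbar Gf x‖ ≤ (n₂ : ℝ)⁻¹ * ∑ j, ‖fderiv ℝ (Gf j) x‖ := by
        rw [DGbar, norm_smul, norm_inv, RCLike.norm_natCast]
        gcongr
        exact norm_sum_le _ _
    _ ≤ (n₂ : ℝ)⁻¹ * ∑ _j : Fin n₂, B_G := by
        gcongr with j
        exact (opNorm_le_hsNorm _).trans (hG_bd j x)
    _ = B_G := by simp [hn]

lemma expect_norm_sq_Ghat_sub_Gbar_le {A : ℕ} (hA : A ≠ 0) {B_G : ℝ}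
    (hGf : ∀ j, ContDiff ℝ 1 (Gf j)) (hG_bd : ∀ j (x : En N), hsNorm (fderiv ℝ (Gf j) x) ≤ B_G) :
    𝔼 a : Fin A → Fin n₂, ‖Ghat Gf x xt a - Gbar Gf x‖ ^ 2 ≤ (B_G * ‖xt - x‖) ^ 2 / A := by
  have hY : ∀ j, ‖Gf j xt - Gf j x‖ ≤ B_G * ‖xt - x‖ := fun j =>
    convex_univ.norm_image_sub_le_of_norm_fderiv_le
      (fun z _ => ((hGf j).differentiable one_ne_zero).differentiableAt)
      (fun z _ => (opNorm_le_hsNorm _).trans (hG_bd j z)) trivial trivial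
  simpa only [Ghat_sub_Gbar, norm_neg, Fintype.card_fin] using
    expect_norm_sq_sampleMean_sub_mean_le_of_norm_le hA hY

lemma expect_norm_sq_Dhat_sub_DGbar_le {B : ℕ} (hB : B ≠ 0) {L_G : ℝ}
    (hG_lip : ∀ j (x x' : En N), hsNorm (fderiv ℝ (Gf j) x - fderiv ℝ (Gf j) x') ≤ L_G * ‖x - x'‖) :
    𝔼 b : Fin B → Fin n₂, ‖Dhat Gf x xt b - DGbar Gf x‖ ^ 2 ≤ (L_G * ‖xt - x‖) ^ 2 / B := by
  have hY : ∀ j, ‖hsColumns (fderiv ℝ (Gf j) xt - fderiv ℝ (Gf j) x)‖ ≤ L_G * ‖xt - x‖ :=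
    fun j => hsNorm_eq_norm_hsColumns _ ▸ hG_lip j xt x
  refine (expect_le_expect fun b _ =>
    pow_le_pow_left₀ (norm_nonneg _) (opNorm_le_hsNorm _) 2).trans ?_
  simpa only [hsNorm_eq_norm_hsColumns, Dhat_sub_DGbar, map_neg, map_sub, map_smul, map_sum,
    norm_neg, Fintype.card_fin] using expect_norm_sq_sampleMean_sub_mean_le_of_norm_le hB hY

lemma norm_sq_adjoint_Dhat_apply_sub_le {f : En M → ℝ} {B_F L_F B_G : ℝ}
    (hf_bd : ∀ y, ‖gradient f y‖ ≤ B_F)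
    (hf_lip : ∀ y y', ‖gradient f y - gradient f y'‖ ≤ L_F * ‖y - y'‖)
    (hG_bd : ∀ j (x : En N), hsNorm (fderiv ℝ (Gf j) x) ≤ B_G)
    {A B : ℕ} (a : Fin A → Fin n₂) (b : Fin B → Fin n₂) :
    ‖ContinuousLinearMap.adjoint (Dhat Gf x xt b) (gradient f (Ghat Gf x xt a))
        - ContinuousLinearMap.adjoint (DGbar Gf x) (gradient f (Gbar Gf x))‖ ^ 2
      ≤ 2 * (B_G * L_F) ^ 2 * ‖Ghat Gf x xt a - Gbar Gf x‖ ^ 2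
        + 2 * B_F ^ 2 * ‖Dhat Gf x xt b - DGbar Gf x‖ ^ 2 := by
  refine (norm_adjoint_apply_sub_adjoint_apply_sq_le _ _ _ _).trans ?_
  have hDG := norm_DGbar_le Gf x hG_bd
  have hBG : 0 ≤ B_G := (norm_nonneg _).trans hDG
  have hf := hf_bd (Ghat Gf x xt a)
  have hf' := hf_lip (Ghat Gf x xt a) (Gbar Gf x)
  calc _ ≤ 2 * (‖Dhat Gf x xt b - DGbar Gf x‖ * B_F) ^ 2
        + 2 * (B_G * (L_F * ‖Ghat Gf x xt a - Gbar Gf x‖)) ^ 2 := by gcongr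
    _ = _ := by ring

end Estimators

lemma norm_sub_sq_le {E : Type*} [SeminormedAddCommGroup E] (u v w : E) :
    ‖u - v‖ ^ 2 ≤ 2 * (‖v - w‖ ^ 2 + ‖u - w‖ ^ 2) := by
  calc ‖u - v‖ ^ 2 ≤ (‖v - w‖ + ‖u - w‖) ^ 2 := by
        gcongr
        simpa only [dist_eq_norm, add_comm] using dist_triangle_right u v w
    _ ≤ _ := add_sq_le

theorem minibatch_composite_gradient_mse_bound_general
    (N M n₁ n₂ A B : ℕ) (hn₂ : 0 < n₂) (hA : 1 ≤ A) (hB : 1 ≤ B)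
    (F : Fin n₁ → En M → ℝ) (Gf : Fin n₂ → En N → En M)
    (hGf : ∀ j, ContDiff ℝ 1 (Gf j))
    (B_F B_G L_F L_G : ℝ)
    (hF_bd : ∀ i (y : En M), ‖gradient (F i) y‖ ≤ B_F)
    (hF_lip : ∀ i (y y' : En M), ‖gradient (F i) y - gradient (F i) y'‖ ≤ L_F * ‖y - y'‖)
    (hG_bd : ∀ j (x : En N), hsNorm (fderiv ℝ (Gf j) x) ≤ B_G)
    (hG_lip : ∀ j (x x' : En N),
      hsNorm (fderiv ℝ (Gf j) x - fderiv ℝ (Gf j) x') ≤ L_G * ‖x - x'‖)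
    (x xt xstar : En N) (i : Fin n₁) :
    (Fintype.card ((Fin A → Fin n₂) × (Fin B → Fin n₂)) : ℝ)⁻¹ *
        ∑ ab : (Fin A → Fin n₂) × (Fin B → Fin n₂),
          ‖ContinuousLinearMap.adjoint (Dhat Gf x xt ab.2)
              (gradient (F i) (Ghat Gf x xt ab.1))
            - ContinuousLinearMap.adjoint (DGbar Gf x) (gradient (F i) (Gbar Gf x))‖ ^ 2
      ≤ 16 * (B_F ^ 2 * L_G ^ 2 / B + B_G ^ 4 * L_F ^ 2 / A) *
          (‖x - xstar‖ ^ 2 + ‖xt - xstar‖ ^ 2) := by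
  have : NeZero n₂ := ⟨hn₂.ne'⟩
  rw [inv_mul_eq_div, ← Fintype.expect_eq_sum_div_card]
  calc _ ≤ 𝔼 ab : (Fin A → Fin n₂) × (Fin B → Fin n₂),
        (2 * (B_G * L_F) ^ 2 * ‖Ghat Gf x xt ab.1 - Gbar Gf x‖ ^ 2
          + 2 * B_F ^ 2 * ‖Dhat Gf x xt ab.2 - DGbar Gf x‖ ^ 2) :=
        expect_le_expect fun ab _ =>
          norm_sq_adjoint_Dhat_apply_sub_le Gf x xt (hF_bd i) (hF_lip i) hG_bd ab.1 ab.2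
    _ = 2 * (B_G * L_F) ^ 2 * 𝔼 a : Fin A → Fin n₂, ‖Ghat Gf x xt a - Gbar Gf x‖ ^ 2
          + 2 * B_F ^ 2 * 𝔼 b : Fin B → Fin n₂, ‖Dhat Gf x xt b - DGbar Gf x‖ ^ 2 := by
        rw [expect_prod_fst_add_snd (fun a => 2 * (B_G * L_F) ^ 2 * ‖Ghat Gf x xt a - Gbar Gf x‖ ^ 2)
          (fun b => 2 * B_F ^ 2 * ‖Dhat Gf x xt b - DGbar Gf x‖ ^ 2), mul_expect, mul_expect]
    _ ≤ 2 * (B_G * L_F) ^ 2 * ((B_G * ‖xt - x‖) ^ 2 / A)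
          + 2 * B_F ^ 2 * ((L_G * ‖xt - x‖) ^ 2 / B) := by
        gcongr
        exacts [expect_norm_sq_Ghat_sub_Gbar_le Gf x xt (by omega) hGf hG_bd,
          expect_norm_sq_Dhat_sub_DGbar_le Gf x xt (by omega) hG_lip]
    _ = 2 * (B_F ^ 2 * L_G ^ 2 / B + B_G ^ 4 * L_F ^ 2 / A) * ‖xt - x‖ ^ 2 := by ring
    _ ≤ 16 * (B_F ^ 2 * L_G ^ 2 / B + B_G ^ 4 * L_F ^ 2 / A) *
          (‖x - xstar‖ ^ 2 + ‖xt - xstar‖ ^ 2) := by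
        have hK : 0 ≤ B_F ^ 2 * L_G ^ 2 / B + B_G ^ 4 * L_F ^ 2 / A := by positivity
        nlinarith [mul_le_mul_of_nonneg_left (norm_sub_sq_le xt x xstar) hK]

/-- mean-squared error bound for the mini-batch estimates
(D̂(b))ᵀ∇Fᵢ(Ĝ(a)) of the composite gradient. -/
theorem minibatch_composite_gradient_mse_bound
    (N M n₁ n₂ A B : ℕ) (hn₁ : 0 < n₁) (hn₂ : 0 < n₂) (hA : 1 ≤ A) (hB : 1 ≤ B)
    (F : Fin n₁ → En M → ℝ) (Gf : Fin n₂ → En N → En M)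
    (hF : ∀ i, ContDiff ℝ 1 (F i)) (hGf : ∀ j, ContDiff ℝ 1 (Gf j))
    (B_F B_G L_F L_G : ℝ)
    (hBFpos : 0 < B_F) (hBGpos : 0 < B_G) (hLFpos : 0 < L_F) (hLGpos : 0 < L_G)
    (hF_bd : ∀ i (y : En M), ‖gradient (F i) y‖ ≤ B_F)
    (hF_lip : ∀ i (y y' : En M), ‖gradient (F i) y - gradient (F i) y'‖ ≤ L_F * ‖y - y'‖)
    (hG_bd : ∀ j (x : En N), hsNorm (fderiv ℝ (Gf j) x) ≤ B_G)
    (hG_lip : ∀ j (x x' : En N),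
      hsNorm (fderiv ℝ (Gf j) x - fderiv ℝ (Gf j) x') ≤ L_G * ‖x - x'‖)
    (x xt xstar : En N) (i : Fin n₁) :
    (Fintype.card ((Fin A → Fin n₂) × (Fin B → Fin n₂)) : ℝ)⁻¹ *
        ∑ ab : (Fin A → Fin n₂) × (Fin B → Fin n₂),
          ‖ContinuousLinearMap.adjoint (Dhat Gf x xt ab.2)
              (gradient (F i) (Ghat Gf x xt ab.1))
            - ContinuousLinearMap.adjoint (DGbar Gf x) (gradient (F i) (Gbar Gf x))‖ ^ 2
      ≤ 16 * (B_F ^ 2 * L_G ^ 2 / B + B_G ^ 4 * L_F ^ 2 / A) *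
          (‖x - xstar‖ ^ 2 + ‖xt - xstar‖ ^ 2) :=
  minibatch_composite_gradient_mse_bound_general N M n₁ n₂ A B hn₂ hA hB F Gf hGf B_F B_G L_F L_G
    hF_bd hF_lip hG_bd hG_lip x xt xstar i
end
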